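/- Let r ≥ t ≥ 1 be integers, and let M be a finite loopless matroid of rank r with no (t+1)-claw whose ground set has exactly 2r − t elements. Then there exist pairwise disjoint sets C_1, …, C_{r−t}, each a circuit of M, and a set K disjoint from all C_i, each of whose elements is a coloop of M, such that the ground set of M equals K ∪ C_1 ∪ ⋯ ∪ C_{r−t} and the rank r of M equals |K| + Σ_{i=1}^{r−t} (|C_i| − 1). (That is, M is the direct sum of r − t circuits and some number of coloops.) -/

import Mathlib

/-- A matroid is *loopless* if every single element of the ground set is independent. -/
def Matroid.IsLoopless {α : Type*} (M : Matroid α) : Prop :=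
  ∀ e ∈ M.E, M.Indep {e}

/-- A *claw* of a matroid is a set that is both a flat and independent. -/
def Matroid.IsClaw {α : Type*} (M : Matroid α) (S : Set α) : Prop :=
  M.IsFlat S ∧ M.Indep S

/-- A *circuit* of a matroid is a minimal dependent set. -/
def Matroid.IsCircuit' {α : Type*} (M : Matroid α) (C : Set α) : Prop :=
  M.Dep C ∧ ∀ D ⊂ C, M.Indep D

/-- An element is a *coloop* if it belongs to every base. -/
def Matroid.IsColoopElem {α : Type*} (M : Matroid α) (e : α) : Prop :=
  ∀ B, M.IsBase B → e ∈ B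

/-
Take an inclusion-maximal claw `F` and a base `B ⊇ F`. For `g ∈ B \ F` the independent set
`F + g` is not a flat, so its closure contains some `q g ∉ B`. Modularity of closure on
independent sets makes `q` injective, and `|E \ B| = r - t` then forces `|F| = t` and `q` to be
onto `E \ B`. The fundamental circuits `C(q g, B) ⊆ F + g + q g` are pairwise disjoint: two of
them meeting in `x ∈ F` would make `F - x + g + h` a `(t+1)`-claw. So `M` is the direct sum of
these circuits and the remaining elements of `B`, which are coloops.
-/

open Set
open scoped Function

namespace Matroid

variable {α : Type*} {M : Matroid α} {B C F I S W X : Set α} {e : α}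

lemma IsCircuit.isCircuit' (hC : M.IsCircuit C) : M.IsCircuit' C :=
  ⟨hC.dep, fun _ hD ↦ (isCircuit_iff_forall_ssubset.1 hC).2 hD⟩

lemma IsColoop.isColoopElem (he : M.IsColoop e) : M.IsColoopElem e :=
  fun _ hB ↦ he.mem_of_isBase hB

lemma IsLoopless.loopless (h : M.IsLoopless) : M.Loopless :=
  loopless_iff_forall_isNonloop.2 fun e he ↦ indep_singleton.1 (h e he)

lemma isClaw_empty (M : Matroid α) [M.Loopless] : M.IsClaw ∅ :=
  ⟨isFlat_iff_closure_eq.2 (by rw [closure_empty, loops_eq_empty]), M.empty_indep⟩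

lemma IsClaw.subset (hS : M.IsClaw S) (hXS : X ⊆ S) : M.IsClaw X := by
  have hclS : M.closure X ⊆ S := hS.1.closure ▸ M.closure_subset_closure hXS
  exact ⟨isFlat_iff_closure_eq.2 <| (inter_eq_left.2 hclS).symm.trans
    (hS.2.closure_inter_eq_self_of_subset hXS), hS.2.subset hXS⟩

lemma IsClaw.ncard_le {t : ℕ} (hS : M.IsClaw S) (h : ¬ ∃ X, M.IsClaw X ∧ X.ncard = t + 1) :
    S.ncard ≤ t := by
  by_contra! hlt
  obtain ⟨X, hXS, hX⟩ := exists_subset_card_eq hlt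
  exact h ⟨X, hS.subset hXS, hX⟩

lemma exists_maximal_isClaw (M : Matroid α) [M.Loopless] (hE : M.E.Finite) :
    ∃ F, Maximal M.IsClaw F := by
  have hfin : {S | M.IsClaw S}.Finite :=
    hE.finite_subsets.subset fun S (hS : M.IsClaw S) ↦ hS.1.subset_ground
  exact hfin.exists_maximal ⟨∅, M.isClaw_empty⟩

lemma exists_mem_closure_insert_of_maximal_isClaw (hF : Maximal M.IsClaw F) (he : e ∈ M.E)
    (heF : e ∉ F) : ∃ f ∈ M.closure (insert e F), f ∉ insert e F := by
  by_contra! hcl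
  have hindep : M.Indep (insert e F) := by
    rw [hF.prop.2.insert_indep_iff_of_notMem heF, hF.prop.1.closure]
    exact ⟨he, heF⟩
  have hflat : M.IsFlat (insert e F) :=
    isFlat_iff_closure_eq.2 (Subset.antisymm hcl (M.subset_closure _ hindep.subset_ground))
  exact heF (hF.2 ⟨hflat, hindep⟩ (subset_insert e F) (mem_insert e F))

lemma Indep.fundCircuit_eq_of_subset (hB : M.Indep B) (hIB : I ⊆ B) (he : e ∈ M.closure I)
    (heB : e ∉ B) : M.fundCircuit e B = M.fundCircuit e I :=
  (((hB.subset hIB).fundCircuit_isCircuit he (notMem_subset hIB heB)).eq_fundCircuit_of_subset hB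
    ((fundCircuit_subset_insert ..).trans (insert_subset_insert hIB))).symm

lemma IsBase.isFlat_of_forall_not_fundCircuit_subset (hB : M.IsBase B) (hWB : W ⊆ B)
    (h : ∀ y ∈ M.E \ B, ¬ M.fundCircuit y B ⊆ insert y W) : M.IsFlat W := by
  refine isFlat_iff_closure_eq.2 (Subset.antisymm (fun y hy ↦ by_contra fun hyW ↦ ?_)
    (M.subset_closure W (hWB.trans hB.subset_ground)))
  by_cases hyB : y ∈ B
  · exact hyW (hB.indep.closure_inter_eq_self_of_subset hWB ▸ ⟨hy, hyB⟩)
  refine h y ⟨mem_ground_of_mem_closure hy, hyB⟩ ?_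
  rw [hB.indep.fundCircuit_eq_of_subset hWB hy hyB]
  exact fundCircuit_subset_insert ..

section DirectSum

variable {ι : Type*} {y : ι → α}

lemma IsBase.isColoop_of_notMem_iUnion_fundCircuit (hB : M.IsBase B) (hy : M.E \ B ⊆ range y)
    (he : e ∈ B) (heC : e ∉ ⋃ i, M.fundCircuit (y i) B) : M.IsColoop e :=
  (hB.isColoop_iff_forall_notMem_fundCircuit he).2 fun x hx hex ↦ by
    obtain ⟨i, rfl⟩ := hy hx
    exact heC (mem_iUnion_of_mem i hex)

lemma IsBase.sdiff_iUnion_fundCircuit_union_eq_ground (hB : M.IsBase B) (hyE : ∀ i, y i ∈ M.E)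
    (hy : M.E \ B ⊆ range y) :
    (B \ ⋃ i, M.fundCircuit (y i) B) ∪ ⋃ i, M.fundCircuit (y i) B = M.E := by
  rw [sdiff_union_self]
  refine Subset.antisymm
    (union_subset hB.subset_ground (iUnion_subset fun i ↦ fundCircuit_subset_ground (hyE i)))
    fun x hx ↦ ?_
  by_cases hxB : x ∈ B
  · exact Or.inl hxB
  obtain ⟨i, rfl⟩ := hy ⟨hx, hxB⟩
  exact Or.inr (mem_iUnion_of_mem i (M.mem_fundCircuit _ _))

lemma ncard_eq_ncard_sdiff_iUnion_fundCircuit_add_sum [Fintype ι] (hBfin : B.Finite)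
    (hyB : ∀ i, y i ∉ B) (hdisj : Pairwise (Disjoint on fun i ↦ M.fundCircuit (y i) B)) :
    B.ncard =
      (B \ ⋃ i, M.fundCircuit (y i) B).ncard + ∑ i, ((M.fundCircuit (y i) B).ncard - 1) := by
  have hinter : B ∩ ⋃ i, M.fundCircuit (y i) B = ⋃ i, (M.fundCircuit (y i) B \ {y i}) := by
    simp_rw [inter_iUnion, M.fundCircuit_sdiff_eq_inter (hyB _), inter_comm]
  rw [← ncard_inter_add_ncard_sdiff_eq_ncard B _ hBfin, add_comm, hinter,
    ncard_iUnion_of_finite, finsum_eq_sum_of_fintype]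
  · simp_rw [ncard_sdiff_singleton_of_mem (M.mem_fundCircuit _ _)]
  · exact fun i ↦ M.fundCircuit_sdiff_eq_inter (hyB i) ▸ hBfin.subset inter_subset_right
  · exact fun i j hij ↦ (hdisj hij).mono sdiff_subset sdiff_subset

end DirectSum

/-- For a flat `F`, `q g` is an element parallel to `g` in `M ／ F`. -/
def IsPartnerMap (M : Matroid α) (F B : Set α) (q : α → α) : Prop :=
  ∀ g ∈ B \ F, q g ∈ M.closure (insert g F) \ insert g F

lemma exists_isPartnerMap (hF : Maximal M.IsClaw F) (hB : B ⊆ M.E) :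
    ∃ q, M.IsPartnerMap F B q := by
  choose! q hq using fun g (hg : g ∈ B \ F) ↦
    exists_mem_closure_insert_of_maximal_isClaw hF (hB hg.1) hg.2
  exact ⟨q, hq⟩

namespace IsPartnerMap

variable {q : α → α} {g h : α}

lemma notMem (hq : M.IsPartnerMap F B q) (hB : M.Indep B) (hFB : F ⊆ B) (hg : g ∈ B \ F) :
    q g ∉ B := fun hqB ↦ (hq g hg).2 <|
  hB.closure_inter_eq_self_of_subset (insert_subset hg.1 hFB) ▸ ⟨(hq g hg).1, hqB⟩

lemma injOn (hq : M.IsPartnerMap F B q) (hB : M.Indep B) (hF : M.IsFlat F) (hFB : F ⊆ B) :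
    InjOn q (B \ F) := by
  intro g hg h hh hgh
  by_contra hne
  have hinter : insert g F ∩ insert h F = F := by
    ext x; simp only [mem_inter_iff, mem_insert_iff]
    grind [hg.2, hh.2]
  have hmod := (hB.subset (union_subset (insert_subset hg.1 hFB)
    (insert_subset hh.1 hFB))).closure_inter_eq_inter_closure
  rw [hinter, hF.closure] at hmod
  exact (hq g hg).2 (mem_insert_of_mem _ (hmod ▸ ⟨(hq g hg).1, hgh ▸ (hq h hh).1⟩))

lemma fundCircuit_eq (hq : M.IsPartnerMap F B q) (hB : M.Indep B) (hFB : F ⊆ B)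
    (hg : g ∈ B \ F) : M.fundCircuit (q g) B = M.fundCircuit (q g) (insert g F) :=
  hB.fundCircuit_eq_of_subset (insert_subset hg.1 hFB) (hq g hg).1 (hq.notMem hB hFB hg)

lemma fundCircuit_subset (hq : M.IsPartnerMap F B q) (hB : M.Indep B) (hFB : F ⊆ B)
    (hg : g ∈ B \ F) : M.fundCircuit (q g) B ⊆ insert (q g) (insert g F) :=
  hq.fundCircuit_eq hB hFB hg ▸ fundCircuit_subset_insert ..

lemma mem_fundCircuit (hq : M.IsPartnerMap F B q) (hB : M.Indep B) (hF : M.IsClaw F)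
    (hFB : F ⊆ B) (hg : g ∈ B \ F) : g ∈ M.fundCircuit (q g) B := by
  obtain ⟨hqcl, hqg⟩ := hq g hg
  rw [hq.fundCircuit_eq hB hFB hg,
    (hB.subset (insert_subset hg.1 hFB)).mem_fundCircuit_iff hqcl hqg]
  have hqF : q g ∉ F := fun h ↦ hqg (mem_insert_of_mem _ h)
  have hsdiff : insert (q g) (insert g F) \ {g} = insert (q g) F := by
    ext x; simp only [mem_sdiff, mem_insert_iff, mem_singleton_iff]
    grind [hg.2]
  rw [hsdiff, hF.2.insert_indep_iff_of_notMem hqF, hF.1.closure]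
  exact ⟨mem_ground_of_mem_closure hqcl, hqF⟩

lemma ncard_eq_and_image_eq (hq : M.IsPartnerMap F B q) (hE : M.E.Finite) (hB : M.IsBase B)
    (hF : M.IsFlat F) (hFB : F ⊆ B) {t : ℕ} (hFt : F.ncard ≤ t)
    (hEB : (M.E \ B).ncard + t ≤ B.ncard) : F.ncard = t ∧ q '' (B \ F) = M.E \ B := by
  have hBfin : B.Finite := hE.subset hB.subset_ground
  have himage : q '' (B \ F) ⊆ M.E \ B := by
    rintro _ ⟨g, hg, rfl⟩
    exact ⟨mem_ground_of_mem_closure (hq g hg).1, hq.notMem hB.indep hFB hg⟩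
  have hcard : (q '' (B \ F)).ncard = B.ncard - F.ncard := by
    rw [(hq.injOn hB.indep hF hFB).ncard_image, ncard_sdiff hFB (hBfin.subset hFB)]
  have hle := ncard_le_ncard himage hE.sdiff
  have hFB' := ncard_le_ncard hFB hBfin
  exact ⟨by omega, eq_of_subset_of_ncard_le himage (by omega) hE.sdiff⟩

lemma disjoint_fundCircuit (hq : M.IsPartnerMap F B q) (hB : M.IsBase B) (hF : M.IsClaw F)
    (hFB : F ⊆ B) (hFfin : F.Finite) (hsurj : M.E \ B ⊆ q '' (B \ F))
    (hclaw : ¬ ∃ S, M.IsClaw S ∧ S.ncard = F.ncard + 1) (hg : g ∈ B \ F) (hh : h ∈ B \ F)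
    (hgh : g ≠ h) : Disjoint (M.fundCircuit (q g) B) (M.fundCircuit (q h) B) := by
  rw [disjoint_left]
  intro x hxg hxh
  have hxF : x ∈ F := by
    have hxg' := hq.fundCircuit_subset hB.indep hFB hg hxg
    have hxh' := hq.fundCircuit_subset hB.indep hFB hh hxh
    have hqg := hq.notMem hB.indep hFB hg
    have hqh := hq.notMem hB.indep hFB hh
    have hqgh : q g ≠ q h := fun e ↦ hgh (hq.injOn hB.indep hF.1 hFB hg hh e)
    simp only [mem_insert_iff] at hxg' hxh'
    grind [hg.1, hh.1, hg.2, hh.2]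
  -- `W` is a claw: a circuit `C(q g', B) ⊆ W + q g'` contains `g'`, so `g' ∈ {g, h}`,
  -- and then it contains `x ∉ W` as well.
  set W := insert g (insert h (F \ {x})) with hW
  have hWB : W ⊆ B := insert_subset hg.1 (insert_subset hh.1 (sdiff_subset.trans hFB))
  have hxW : x ∉ W := by
    simp only [hW, mem_insert_iff, mem_sdiff, mem_singleton_iff]
    grind [hg.2, hh.2]
  refine hclaw ⟨W, ⟨hB.isFlat_of_forall_not_fundCircuit_subset hWB ?_, hB.indep.subset hWB⟩,
    ?_⟩
  · rintro y hy hsub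
    obtain ⟨g', hg', rfl⟩ := hsurj hy
    have hq' := hq.notMem hB.indep hFB hg'
    have hg'W : g' ∈ W :=
      (mem_insert_iff.1 (hsub (hq.mem_fundCircuit hB.indep hF hFB hg'))).resolve_left
        fun e ↦ hq' (e ▸ hg'.1)
    have hxg' : x ∈ M.fundCircuit (q g') B := by
      simp only [hW, mem_insert_iff, mem_sdiff] at hg'W
      rcases hg'W with rfl | rfl | hg'F
      · exact hxg
      · exact hxh
      · exact absurd hg'F.1 hg'.2
    rcases mem_insert_iff.1 (hsub hxg') with hx | hx
    · exact hq' (hx ▸ hFB hxF)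
    · exact hxW hx
  · have hgW : g ∉ insert h (F \ {x}) := by
      simp only [mem_insert_iff, mem_sdiff]
      grind [hg.2]
    rw [ncard_insert_of_notMem hgW (hFfin.sdiff.insert h),
      ncard_insert_of_notMem (fun hF' ↦ hh.2 hF'.1) hFfin.sdiff,
      ncard_sdiff_singleton_add_one hxF hFfin]

end IsPartnerMap

end Matroid

theorem loopless_claw_free_equality_general {α : Type*} (r t : ℕ) (hrt : t ≤ r)
    (M : Matroid α) (hfin : M.E.Finite) (hloopless : M.IsLoopless)
    (hrank : ∃ B, M.IsBase B ∧ B.ncard = r)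
    (hclaw : ¬ ∃ S, M.IsClaw S ∧ S.ncard = t + 1)
    (hcard : M.E.ncard = 2 * r - t) :
    ∃ (C : Fin (r - t) → Set α) (K : Set α),
      (∀ i, M.IsCircuit' (C i)) ∧
      (Pairwise (Function.onFun Disjoint C)) ∧
      (∀ i, Disjoint K (C i)) ∧
      (∀ e ∈ K, M.IsColoopElem e) ∧
      (K ∪ ⋃ i, C i) = M.E ∧
      r = K.ncard + ∑ i, ((C i).ncard - 1) := by
  have := hloopless.loopless
  obtain ⟨F, hF⟩ := M.exists_maximal_isClaw hfin
  obtain ⟨B, hB, hFB⟩ := hF.prop.2.exists_isBase_superset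
  obtain ⟨B₀, hB₀, rfl⟩ := hrank
  rw [hB₀.ncard_eq_ncard_of_isBase hB] at hrt hcard ⊢
  have hBfin : B.Finite := hfin.subset hB.subset_ground
  obtain ⟨q, hq⟩ := Matroid.exists_isPartnerMap hF hB.subset_ground
  obtain ⟨rfl, himage⟩ := hq.ncard_eq_and_image_eq hfin hB hF.prop.1 hFB
    (hF.prop.ncard_le hclaw) (by rw [ncard_sdiff hB.subset_ground hBfin, hcard]; omega)
  have := (hBfin.sdiff (t := F)).to_subtype
  let e : Fin (B.ncard - F.ncard) ≃ ↥(B \ F) := (Finite.equivFinOfCardEq <| by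
    rw [Nat.card_coe_set_eq, ncard_sdiff hFB (hBfin.subset hFB)]).symm
  have hyB (i) : q (e i) ∈ M.E \ B := himage ▸ mem_image_of_mem q (e i).2
  have hsurj : M.E \ B ⊆ range fun i ↦ q (e i) := by
    rw [← himage]
    rintro _ ⟨g, hg, rfl⟩
    exact ⟨e.symm ⟨g, hg⟩, by simp⟩
  set C : Fin (B.ncard - F.ncard) → Set α := fun i ↦ M.fundCircuit (q (e i)) B
  have hdisj : Pairwise (Function.onFun Disjoint C) :=
    fun i j hij ↦ hq.disjoint_fundCircuit hB hF.prop hFB (hBfin.subset hFB)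
      himage.symm.subset hclaw (e i).2 (e j).2 (Subtype.coe_injective.ne (e.injective.ne hij))
  refine ⟨C, B \ ⋃ i, C i, fun i ↦ (hB.fundCircuit_isCircuit (hyB i).1 (hyB i).2).isCircuit',
    hdisj, fun i ↦ disjoint_sdiff_left.mono_right (subset_iUnion C i),
    fun x hx ↦ (hB.isColoop_of_notMem_iUnion_fundCircuit hsurj hx.1 hx.2).isColoopElem,
    hB.sdiff_iUnion_fundCircuit_union_eq_ground (fun i ↦ (hyB i).1) hsurj,
    Matroid.ncard_eq_ncard_sdiff_iUnion_fundCircuit_add_sum hBfin (fun i ↦ (hyB i).2) hdisj⟩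

/-- For `r ≥ t ≥ 1`, a finite loopless rank-`r` matroid with no `(t+1)`-claw and exactly
`2r − t` elements is the direct sum of `r − t` circuits and some number of coloops:
there are pairwise disjoint circuits `C_1, …, C_{r−t}` and a disjoint set `K` of coloops
covering the ground set with `r = |K| + Σ (|C_i| − 1)`. -/
theorem loopless_claw_free_equality {α : Type*} (r t : ℕ) (ht : 1 ≤ t) (hrt : t ≤ r)
    (M : Matroid α) (hfin : M.E.Finite) (hloopless : M.IsLoopless)
    (hrank : ∃ B, M.IsBase B ∧ B.ncard = r)
    (hclaw : ¬ ∃ S, M.IsClaw S ∧ S.ncard = t + 1)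
    (hcard : M.E.ncard = 2 * r - t) :
    ∃ (C : Fin (r - t) → Set α) (K : Set α),
      (∀ i, M.IsCircuit' (C i)) ∧
      (Pairwise (Function.onFun Disjoint C)) ∧
      (∀ i, Disjoint K (C i)) ∧
      (∀ e ∈ K, M.IsColoopElem e) ∧
      (K ∪ ⋃ i, C i) = M.E ∧
      r = K.ncard + ∑ i, ((C i).ncard - 1) :=
  loopless_claw_free_equality_general r t hrt M hfin hloopless hrank hclaw hcard
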